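/- arXiv:2202.11856 — 5 statements merged into one kernel-verified Lean document; each statement's English description precedes it below -/
import Mathlib

section
/- Define ν(x,y) = 4xy/(x+y) − (x+y)/2 for real x, y > 0. If x > 0 and x/3 ≤ y ≤ 3x, then min(x,y) ≤ ν(x,y) ≤ max(x,y). If moreover x/3 < y < 3x and x ≠ y, then min(x,y) < ν(x,y) < max(x,y). -/
theorem stmt12 (x y : ℝ) (hx : 0 < x) :
    (x / 3 ≤ y → y ≤ 3 * x →
      min x y ≤ 4 * x * y / (x + y) - (x + y) / 2 ∧
      4 * x * y / (x + y) - (x + y) / 2 ≤ max x y) ∧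
    (x / 3 < y → y < 3 * x → x ≠ y →
      min x y < 4 * x * y / (x + y) - (x + y) / 2 ∧
      4 * x * y / (x + y) - (x + y) / 2 < max x y) := by
  constructor
  · intro h1 h2
    have hy : 0 < y := lt_of_lt_of_le (by linarith) h1
    have hs : 0 < x + y := by linarith
    have ht : (4 * x * y / (x + y)) * (x + y) = 4 * x * y :=
      div_mul_cancel₀ _ (ne_of_gt hs)
    rcases le_total x y with h | h
    · rw [min_eq_left h, max_eq_right h]
      constructor
      · nlinarith [mul_nonneg (sub_nonneg.2 h) (by linarith : (0:ℝ) ≤ 3*x - y)]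
      · nlinarith [mul_nonneg (sub_nonneg.2 h) (by linarith : (0:ℝ) ≤ 3*y - x)]
    · rw [min_eq_right h, max_eq_left h]
      constructor
      · nlinarith [mul_nonneg (sub_nonneg.2 h) (by linarith : (0:ℝ) ≤ 3*y - x)]
      · nlinarith [mul_nonneg (sub_nonneg.2 h) (by linarith : (0:ℝ) ≤ 3*x - y)]
  · intro h1 h2 hne
    have hy : 0 < y := lt_of_lt_of_le (by positivity) h1.le
    have hs : 0 < x + y := by linarith
    have ht : (4 * x * y / (x + y)) * (x + y) = 4 * x * y :=
      div_mul_cancel₀ _ (ne_of_gt hs)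
    rcases lt_or_gt_of_ne hne with h | h
    · rw [min_eq_left h.le, max_eq_right h.le]
      constructor
      · nlinarith [mul_pos (sub_pos.2 h) (by linarith : (0:ℝ) < 3*x - y)]
      · nlinarith [mul_pos (sub_pos.2 h) (by linarith : (0:ℝ) < 3*y - x)]
    · rw [min_eq_right h.le, max_eq_left h.le]
      constructor
      · nlinarith [mul_pos (sub_pos.2 h) (by linarith : (0:ℝ) < 3*y - x)]
      · nlinarith [mul_pos (sub_pos.2 h) (by linarith : (0:ℝ) < 3*x - y)]
end

section
/- For all real x, y with x > 0 and x + y > 0: min(x,y) ≤ μ₁(x,y) ≤ max(x,y), with strict inequalities whenever x ≠ y; моreover μ₁(r·x, r·y) = r·μ₁(x,y) for every real r > 0. -/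
noncomputable def mu1 (x y : ℝ) : ℝ :=
  (2 * x + Real.sqrt (2 * x * (x + y))) / 4

noncomputable def mu2 (x y : ℝ) : ℝ :=
  x * (6 * Real.sqrt (2 * x * (x + y)) - y - 3 * x) /
    (2 * (2 * x + Real.sqrt (2 * x * (x + y))))

lemma mu1_strict (x y : ℝ) (hx : 0 < x) (hxy : 0 < x + y) (hne : x ≠ y) :
    min x y < mu1 x y ∧ mu1 x y < max x y := by
  have hA : (0:ℝ) < 2 * x * (x + y) := by positivity
  set s := Real.sqrt (2 * x * (x + y)) with hsdef
  have hs2 : s * s = 2 * x * (x + y) := Real.mul_self_sqrt (le_of_lt hA)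
  have hs0 : 0 < s := Real.sqrt_pos.mpr hA
  rcases lt_or_gt_of_ne hne with h | h
  · -- x < y
    rw [min_eq_left h.le, max_eq_right h.le]
    constructor
    · -- x < (2x+s)/4  ⇔  2x < s
      have : 2 * x < s := by nlinarith
      unfold mu1; linarith
    · -- (2x+s)/4 < y  ⇔  s < 4y - 2x
      have h8 : 0 < 8 * y - x := by linarith
      have hyx : 0 < y - x := by linarith
      have : s < 4 * y - 2 * x := by nlinarith [mul_pos hyx h8]
      unfold mu1; linarith
  · -- y < x
    rw [min_eq_right h.le, max_eq_left h.le]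
    constructor
    · -- y < (2x+s)/4  ⇔  4y - 2x < s
      rcases le_or_gt (4 * y) (2 * x) with hc | hc
      · unfold mu1; linarith
      · have hy2 : 0 < 8 * y - x := by linarith
        have hxy' : 0 < x - y := by linarith
        have : 4 * y - 2 * x < s := by nlinarith [mul_pos hxy' hy2]
        unfold mu1; linarith
    · have : s < 2 * x := by nlinarith
      unfold mu1; linarith

theorem stmt14 (x y : ℝ) (hx : 0 < x) (hxy : 0 < x + y) :
    (min x y ≤ mu1 x y ∧ mu1 x y ≤ max x y) ∧
    (x ≠ y → min x y < mu1 x y ∧ mu1 x y < max x y) ∧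
    (∀ r : ℝ, 0 < r → mu1 (r * x) (r * y) = r * mu1 x y) := by
  refine ⟨?_, fun hne => mu1_strict x y hx hxy hne, ?_⟩
  · by_cases hne : x = y
    · subst hne
      have : mu1 x x = x := by
        unfold mu1
        rw [show 2 * x * (x + x) = (2 * x) ^ 2 by ring, Real.sqrt_sq (by linarith)]
        ring
      rw [this]
      simp
    · obtain ⟨h1, h2⟩ := mu1_strict x y hx hxy hne
      exact ⟨h1.le, h2.le⟩
  · intro r hr
    unfold mu1
    rw [show 2 * (r * x) * (r * x + r * y) = r ^ 2 * (2 * x * (x + y)) by ring,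
      Real.sqrt_mul (by positivity), Real.sqrt_sq hr.le]
    ring
end

section
/- For all real x, y with x > 0 and 0 < y < 17x: min(x,y) ≤ μ₂(x,y) ≤ max(x,y), with strict inequalities whenever x ≠ y; moreover μ₂(r·x, r·y) = r·μ₂(x,y) for every real r > 0. -/
section BetweenOfMulSub

variable {α : Type*} [Ring α] [LinearOrder α] [IsStrictOrderedRing α] {a b m : α}

theorem min_le_and_le_max_of_mul_sub_nonpos (h : (m - a) * (m - b) ≤ 0) :
    min a b ≤ m ∧ m ≤ max a b := by
  rcases mul_nonpos_iff.mp h with ⟨ha, hb⟩ | ⟨ha, hb⟩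
  · exact ⟨min_le_of_left_le (sub_nonneg.mp ha), le_max_of_le_right (sub_nonpos.mp hb)⟩
  · exact ⟨min_le_of_right_le (sub_nonneg.mp hb), le_max_of_le_left (sub_nonpos.mp ha)⟩

theorem min_lt_and_lt_max_of_mul_sub_neg (h : (m - a) * (m - b) < 0) :
    min a b < m ∧ m < max a b := by
  rcases mul_neg_iff.mp h with ⟨ha, hb⟩ | ⟨ha, hb⟩
  · exact ⟨min_lt_of_left_lt (sub_pos.mp ha), lt_max_of_lt_right (sub_neg.mp hb)⟩
  · exact ⟨min_lt_of_right_lt (sub_pos.mp hb), lt_max_of_lt_left (sub_neg.mp ha)⟩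

end BetweenOfMulSub

theorem mu2_mul_mul {r : ℝ} (hr : 0 ≤ r) (x y : ℝ) : mu2 (r * x) (r * y) = r * mu2 x y := by
  rw [mu2, mu2, show 2 * (r * x) * (r * x + r * y) = r ^ 2 * (2 * x * (x + y)) by ring,
    Real.sqrt_mul (sq_nonneg r), Real.sqrt_sq hr]
  rcases hr.eq_or_lt with rfl | hr
  · simp
  set s := Real.sqrt (2 * x * (x + y))
  rw [show r * x * (6 * (r * s) - r * y - 3 * (r * x)) = r * (r * (x * (6 * s - y - 3 * x))) by
      ring,
    show 2 * (2 * (r * x) + r * s) = r * (2 * (2 * x + s)) by ring, mul_div_mul_left _ _ hr.ne',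
    mul_div_assoc]

theorem mu2_sub_mul_mu2_sub {x y s : ℝ} (hx : 0 < x) (hxy : 0 ≤ x + y)
    (hs : Real.sqrt (2 * x * (x + y)) = s) :
    (mu2 x y - x) * (mu2 x y - y) =
      -((s - 2 * x) ^ 2 *
        ((6 * x - s) * (2 * s ^ 2 + 9 * x * s + 2 * x ^ 2) / (16 * x * (s + 2 * x) ^ 2))) := by
  have hs0 : 0 ≤ s := hs ▸ Real.sqrt_nonneg _
  have hy : y = (s ^ 2 - 2 * x ^ 2) / (2 * x) := by
    have := hs ▸ Real.sq_sqrt (by positivity : 0 ≤ 2 * x * (x + y))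
    field_simp
    linarith
  have hden : s + 2 * x ≠ 0 := by positivity
  rw [mu2, hs, hy]
  field_simp
  ring

theorem sqrt_two_mul_mul_add_lt {x y : ℝ} (hx : 0 < x) (hy : y < 17 * x) :
    Real.sqrt (2 * x * (x + y)) < 6 * x := by
  rw [Real.sqrt_lt' (by positivity)]
  nlinarith

theorem sqrt_two_mul_mul_add_ne {x y : ℝ} (hx : 0 < x) (hxy : 0 ≤ x + y) (hne : x ≠ y) :
    Real.sqrt (2 * x * (x + y)) ≠ 2 * x := by
  intro h
  have := Real.sq_sqrt (by positivity : 0 ≤ 2 * x * (x + y))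
  rw [h] at this
  exact hne (by nlinarith)

theorem stmt16 (x y : ℝ) (hx : 0 < x) (hy : 0 < y) (hy17 : y < 17 * x) :
    (min x y ≤ mu2 x y ∧ mu2 x y ≤ max x y) ∧
    (x ≠ y → min x y < mu2 x y ∧ mu2 x y < max x y) ∧
    (∀ r : ℝ, 0 < r → mu2 (r * x) (r * y) = r * mu2 x y) := by
  have hxy : 0 ≤ x + y := by positivity
  set s := Real.sqrt (2 * x * (x + y)) with hs
  have hprod := mu2_sub_mul_mu2_sub hx hxy hs.symm
  have hfactor : 0 < (6 * x - s) * (2 * s ^ 2 + 9 * x * s + 2 * x ^ 2) /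
      (16 * x * (s + 2 * x) ^ 2) := by
    have hs6 := sub_pos.mpr (sqrt_two_mul_mul_add_lt hx hy17)
    have hs0 : 0 ≤ s := Real.sqrt_nonneg _
    positivity
  refine ⟨min_le_and_le_max_of_mul_sub_nonpos ?_, fun hne ↦ min_lt_and_lt_max_of_mul_sub_neg ?_,
    fun r hr ↦ mu2_mul_mul hr.le x y⟩
  · rw [hprod]
    exact neg_nonpos.mpr (mul_nonneg (sq_nonneg _) hfactor.le)
  · rw [hprod]
    have hs2 := sub_ne_zero.mpr (sqrt_two_mul_mul_add_ne hx hxy hne)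
    exact neg_neg_of_pos (mul_pos (by positivity) hfactor)
end

section
/- For all real x, y with x > 0 and x + y > 0: μ₂(x,y) ≤ μ₁(x,y), with strict inequality whenever x ≠ y, and μ₁(x,y) + μ₂(x,y) > 0. If in addition y ≤ x (i.e., −x < y ≤ x), then μ₁(x,y) + μ₂(x,y) ≥ x + y. -/
theorem stmt17 (x y : ℝ) (hx : 0 < x) (hxy : 0 < x + y) :
    mu2 x y ≤ mu1 x y ∧
    (x ≠ y → mu2 x y < mu1 x y) ∧
    0 < mu1 x y + mu2 x y ∧
    (y ≤ x → x + y ≤ mu1 x y + mu2 x y) := by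
  have hs0 : 0 < Real.sqrt (2 * x * (x + y)) :=
    Real.sqrt_pos.mpr (by positivity)
  have hs2 : Real.sqrt (2 * x * (x + y)) ^ 2 = 2 * x * (x + y) :=
    Real.sq_sqrt (by positivity)
  simp only [mu1, mu2]
  generalize Real.sqrt (2 * x * (x + y)) = s at hs0 hs2 ⊢
  have hD : 0 < 2 * x + s := by linarith
  have key : 0 ≤ 3 * x + y - 2 * s := by nlinarith [sq_nonneg (x - y)]
  have hsum : (2 * x + s) / 4 + x * (6 * s - y - 3 * x) / (2 * (2 * x + s)) =
      4 * x * s / (2 * x + s) := by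
    field_simp
    nlinarith [hs2]
  refine ⟨?_, ?_, ?_, ?_⟩
  · rw [div_le_div_iff₀ (by positivity) (by norm_num)]
    nlinarith [mul_nonneg hx.le key]
  · intro hne
    have key' : 0 < 3 * x + y - 2 * s := by
      nlinarith [sq_pos_of_ne_zero (sub_ne_zero.mpr hne)]
    rw [div_lt_div_iff₀ (by positivity) (by norm_num)]
    nlinarith [mul_pos hx key']
  · rw [hsum]; positivity
  · intro hyx
    rw [hsum, le_div_iff₀ hD]
    have key2 : s ≤ 3 * x - y := by
      nlinarith [mul_nonneg (sub_nonneg.mpr hyx) (by linarith : (0:ℝ) ≤ 7 * x - y)]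
    nlinarith [mul_nonneg hs0.le (by linarith : (0:ℝ) ≤ 3 * x - y - s)]
end

section
/- Let x, y be real numbers with x > 0 and x + y > 0, and define sequences (x_n), (y_n) by (x₀, y₀) = (x, y) and (x_{n+1}, y_{n+1}) = (μ₁(x_n, y_n), μ₂(x_n, y_n)). Then both sequences converge and there exists a real number L > 0 with lim_{n→∞} x_n = lim_{n→∞} y_n = L. -/
/-!
With `G n = √(2 X n (X n + Y n)) / 2`, the recursion becomes `X (n+1) = (X n + G n) / 2` and
`G (n+1) = √(X n G n)`: the pair `(X n, G n)` runs through Gauss's arithmetic–geometric mean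
iteration, so both converge to `L = agm (X 0) (G 0) > 0`. Since `Y n = 2 G n ^ 2 / X n - X n`,
the sequence `Y` tends to `2 L ^ 2 / L - L = L` as well.
-/

open Filter Topology NNReal

section AGM

variable {a g : ℕ → ℝ}

lemma coe_agmSequences_of_recursion (ha0 : 0 ≤ a 0) (hg0 : 0 ≤ g 0)
    (ha : ∀ n, a (n + 1) = (a n + g n) / 2) (hg : ∀ n, g (n + 1) = √(a n * g n)) (n : ℕ) :
    ((agmSequences (a 0).toNNReal (g 0).toNNReal n).1 : ℝ) = g (n + 1) ∧
      ((agmSequences (a 0).toNNReal (g 0).toNNReal n).2 : ℝ) = a (n + 1) := by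
  induction n with
  | zero =>
    simp [ha, hg, Real.coe_toNNReal _ ha0, Real.coe_toNNReal _ hg0]
  | succ n ih =>
    rw [agmSequences_succ', ha (n + 1), hg (n + 1), ← ih.1, ← ih.2]
    simp [add_comm, mul_comm]

theorem tendsto_agm_of_recursion (ha0 : 0 ≤ a 0) (hg0 : 0 ≤ g 0)
    (ha : ∀ n, a (n + 1) = (a n + g n) / 2) (hg : ∀ n, g (n + 1) = √(a n * g n)) :
    Tendsto a atTop (𝓝 (agm (a 0).toNNReal (g 0).toNNReal)) ∧
      Tendsto g atTop (𝓝 (agm (a 0).toNNReal (g 0).toNNReal)) := by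
  have hseq := coe_agmSequences_of_recursion ha0 hg0 ha hg
  constructor
  · rw [← tendsto_add_atTop_iff_nat 1]
    simpa only [(hseq _).2] using NNReal.tendsto_coe.2
      (tendsto_agmSequences_snd_agm (x := (a 0).toNNReal) (y := (g 0).toNNReal))
  · rw [← tendsto_add_atTop_iff_nat 1]
    simpa only [(hseq _).1] using NNReal.tendsto_coe.2
      (tendsto_agmSequences_fst_agm (x := (a 0).toNNReal) (y := (g 0).toNNReal))

end AGM

noncomputable def agmPartner (x y : ℝ) : ℝ := √(2 * x * (x + y)) / 2

section

variable {x y : ℝ}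

lemma agmPartner_pos (hx : 0 < x) (hxy : 0 < x + y) : 0 < agmPartner x y := by
  unfold agmPartner; positivity

lemma mu1_eq_half_add_agmPartner : mu1 x y = (x + agmPartner x y) / 2 := by
  unfold mu1 agmPartner; ring

lemma mu1_mul_mu1_add_mu2 (hx : 0 < x) (hxy : 0 < x + y) :
    mu1 x y * (mu1 x y + mu2 x y) = 2 * x * agmPartner x y := by
  have hs : 0 < √(2 * x * (x + y)) := by positivity
  have hs2 : √(2 * x * (x + y)) ^ 2 = 2 * x * (x + y) := Real.sq_sqrt (by positivity)
  unfold mu1 mu2 agmPartner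
  generalize √(2 * x * (x + y)) = s at *
  field_simp
  linear_combination 2 * hs2

lemma mu1_pos (hx : 0 < x) (hxy : 0 < x + y) : 0 < mu1 x y := by
  rw [mu1_eq_half_add_agmPartner]; linarith [agmPartner_pos hx hxy]

lemma mu1_add_mu2_pos (hx : 0 < x) (hxy : 0 < x + y) : 0 < mu1 x y + mu2 x y := by
  have h := mu1_mul_mu1_add_mu2 hx hxy
  have := agmPartner_pos hx hxy
  exact pos_of_mul_pos_right (h ▸ by positivity) (mu1_pos hx hxy).le

lemma agmPartner_mu (hx : 0 < x) (hxy : 0 < x + y) :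
    agmPartner (mu1 x y) (mu2 x y) = √(x * agmPartner x y) := by
  rw [agmPartner, mul_assoc, mu1_mul_mu1_add_mu2 hx hxy,
    show 2 * (2 * x * agmPartner x y) = 2 ^ 2 * (x * agmPartner x y) by ring,
    Real.sqrt_mul (by positivity), Real.sqrt_sq two_pos.le]
  ring

lemma eq_two_mul_agmPartner_sq_div_sub (hx : 0 < x) (hxy : 0 < x + y) :
    y = 2 * agmPartner x y ^ 2 / x - x := by
  rw [agmPartner, div_pow, Real.sq_sqrt (by positivity)]
  field_simp
  ring

end

theorem stmt18 (x y : ℝ) (hx : 0 < x) (hxy : 0 < x + y)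
    (X Y : ℕ → ℝ) (hX0 : X 0 = x) (hY0 : Y 0 = y)
    (hXs : ∀ n, X (n + 1) = mu1 (X n) (Y n))
    (hYs : ∀ n, Y (n + 1) = mu2 (X n) (Y n)) :
    ∃ L : ℝ, 0 < L ∧
      Filter.Tendsto X Filter.atTop (nhds L) ∧
      Filter.Tendsto Y Filter.atTop (nhds L) := by
  have hpos : ∀ n, 0 < X n ∧ 0 < X n + Y n := by
    intro n
    induction n with
    | zero => exact hX0 ▸ hY0 ▸ ⟨hx, hxy⟩
    | succ n ih => rw [hXs, hYs]; exact ⟨mu1_pos ih.1 ih.2, mu1_add_mu2_pos ih.1 ih.2⟩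
  set G : ℕ → ℝ := fun n => agmPartner (X n) (Y n)
  have hG n : G (n + 1) = √(X n * G n) := by
    simp only [G, hXs, hYs, agmPartner_mu (hpos n).1 (hpos n).2]
  have hX n : X (n + 1) = (X n + G n) / 2 := by rw [hXs, mu1_eq_half_add_agmPartner]
  set L : ℝ := (agm (X 0).toNNReal (G 0).toNNReal : ℝ)
  have hL : 0 < L := agm_pos (by simpa using (hpos 0).1)
    (by simpa using agmPartner_pos (hpos 0).1 (hpos 0).2)
  obtain ⟨hXL, hGL⟩ := tendsto_agm_of_recursion (hpos 0).1.le
    (agmPartner_pos (hpos 0).1 (hpos 0).2).le hX hG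
  refine ⟨L, hL, hXL, ?_⟩
  have hY : Y = fun n => 2 * G n ^ 2 / X n - X n :=
    funext fun n => eq_two_mul_agmPartner_sq_div_sub (hpos n).1 (hpos n).2
  have : 2 * L ^ 2 / L - L = L := by field_simp; ring
  rw [hY, ← this]
  exact (((hGL.pow 2).const_mul 2).div hXL hL.ne').sub hXL
end
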